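/- If 𝔟 = 𝔡 (the classical bounding and dominating numbers for eventual domination on ω^ω are equal), then 𝔡(≤*_{{∅}}) = 𝔡^𝔠_𝔟. -/

import Mathlib

open Cardinal

/-- Baire space: the set of functions ℕ → ℕ. -/
abbrev Baire : Type := ℕ → ℕ

/-- A slalom is a function `s : ℕ → Finset ℕ` with `|s n| ≤ n` for all `n`. -/
abbrev Slalom : Type := {s : ℕ → Finset ℕ // ∀ n, (s n).card ≤ n}

/-- `x ≤* y` : `x n ≤ y n` for all but finitely many `n`. -/
def leStar (x y : Baire) : Prop := ∀ᶠ n in Filter.atTop, x n ≤ y n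

/-- `x ≠* y` : `x n ≠ y n` for all but finitely many `n`. -/
def neStar (x y : Baire) : Prop := ∀ᶠ n in Filter.atTop, x n ≠ y n

/-- `x ∈* s` : `x n ∈ s n` for all but finitely many `n`. -/
def inStar (x : Baire) (s : Slalom) : Prop := ∀ᶠ n in Filter.atTop, x n ∈ s.1 n

/-- The bounding number `𝔟(R)` of a relation: least cardinality of an `R`-unbounded set. -/
noncomputable def bnum {X Y : Type} (R : X → Y → Prop) : Cardinal :=
  sInf { c | ∃ A : Set X, #A = c ∧ ∀ y : Y, ∃ x ∈ A, ¬ R x y }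

/-- The dominating number `𝔡(R)` of a relation: least cardinality of an `R`-dominating set. -/
noncomputable def dnum {X Y : Type} (R : X → Y → Prop) : Cardinal :=
  sInf { c | ∃ D : Set Y, #D = c ∧ ∀ x : X, ∃ y ∈ D, R x y }

/-- The relation `R_I` on functions `ω^ω → ω^ω` (resp. `ω^ω → S`):
`f R_I g` iff `{x : ¬ f x R g x} ∈ I`. -/
def RelMod {Y : Type} (R : Baire → Y → Prop) (I : Set (Set Baire))
    (f : Baire → Baire) (g : Baire → Y) : Prop :=
  {x : Baire | ¬ R (f x) (g x)} ∈ I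

/-- An ideal on `ω^ω`: nonempty, closed under subsets and finite unions. -/
def IsIdeal (I : Set (Set Baire)) : Prop :=
  I.Nonempty ∧ (∀ A B : Set Baire, A ∈ I → B ⊆ A → B ∈ I) ∧
    (∀ A B : Set Baire, A ∈ I → B ∈ I → A ∪ B ∈ I)

/-- A σ-ideal: an ideal moreover closed under countable unions. -/
def IsSigmaIdeal (I : Set (Set Baire)) : Prop :=
  IsIdeal I ∧ ∀ f : ℕ → Set Baire, (∀ n, f n ∈ I) → (⋃ n, f n) ∈ I

/-- `𝔡^λ_κ`: the dominating number of the relation on `κ^λ` given by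
`f ≤* g` iff `|{α < λ : f α > g α}| < κ`. -/
noncomputable def dLamKappa (lam κ : Cardinal) : Cardinal :=
  dnum (fun f g : lam.ord.ToType → κ.ord.ToType => #{a | ¬ f a ≤ g a} < κ)

open Filter Set Ordinal

def evLT (x y : Baire) : Prop := ∀ᶠ n in Filter.atTop, x n < y n

lemma leStar_refl (x : Baire) : leStar x x := Filter.Eventually.of_forall (fun _ => le_rfl)

lemma leStar_trans {x y z : Baire} (h1 : leStar x y) (h2 : leStar y z) : leStar x z :=
  (h1.and h2).mono fun _ ⟨a, b⟩ => a.trans b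

lemma evLT.leStar {x y : Baire} (h : evLT x y) : leStar x y := h.mono fun _ => le_of_lt

lemma evLT_trans_leStar {x y z : Baire} (h1 : evLT x y) (h2 : leStar y z) : evLT x z :=
  (h1.and h2).mono fun _ ⟨a, b⟩ => lt_of_lt_of_le a b

lemma leStar_trans_evLT {x y z : Baire} (h1 : leStar x y) (h2 : evLT y z) : evLT x z :=
  (h1.and h2).mono fun _ ⟨a, b⟩ => lt_of_le_of_lt a b

lemma not_leStar_evLT {x y : Baire} (h1 : leStar x y) (h2 : evLT y x) : False := by
  obtain ⟨n, h3⟩ := (h1.and h2).exists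
  exact absurd h3.1 (not_le.mpr h3.2)

/-- Generic: any family smaller than `bnum R` is bounded. -/
lemma bounded_of_lt_bnum {X Y : Type} {R : X → Y → Prop} {A : Set X}
    (hA : #A < bnum R) : ∃ y, ∀ x ∈ A, R x y := by
  by_contra hc
  push_neg at hc
  have hmem : #A ∈ { c | ∃ A : Set X, #A = c ∧ ∀ y : Y, ∃ x ∈ A, ¬ R x y } :=
    ⟨A, rfl, fun y => by obtain ⟨x, hx1, hx2⟩ := hc y; exact ⟨x, hx1, hx2⟩⟩
  exact absurd (csInf_le' hmem) (not_le.mpr hA)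

lemma dnum_le_of_dominating {X Y : Type} {R : X → Y → Prop} {D : Set Y}
    (hD : ∀ x : X, ∃ y ∈ D, R x y) : dnum R ≤ #D :=
  csInf_le' ⟨D, rfl, hD⟩

lemma le_dnum {X Y : Type} {R : X → Y → Prop} (c : Cardinal)
    (hne : ∃ D : Set Y, ∀ x : X, ∃ y ∈ D, R x y)
    (H : ∀ D : Set Y, (∀ x : X, ∃ y ∈ D, R x y) → c ≤ #D) : c ≤ dnum R := by
  apply le_csInf
  · obtain ⟨D, hD⟩ := hne; exact ⟨#D, D, rfl, hD⟩
  · rintro d ⟨D, rfl, hD⟩; exact H D hD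

lemma exists_dominating_dnum {X Y : Type} {R : X → Y → Prop}
    (hne : ∃ D : Set Y, ∀ x : X, ∃ y ∈ D, R x y) :
    ∃ D : Set Y, #D = dnum R ∧ ∀ x : X, ∃ y ∈ D, R x y := by
  have : dnum R ∈ { c | ∃ D : Set Y, #D = c ∧ ∀ x : X, ∃ y ∈ D, R x y } := by
    apply csInf_mem
    obtain ⟨D, hD⟩ := hne
    exact ⟨#D, D, rfl, hD⟩
  obtain ⟨D, h1, h2⟩ := this
  exact ⟨D, h1, h2⟩

lemma exists_unbounded_bnum : ∃ A : Set Baire, #A = bnum leStar ∧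
    ∀ y : Baire, ∃ x ∈ A, ¬ leStar x y := by
  have : bnum leStar ∈ { c | ∃ A : Set Baire, #A = c ∧ ∀ y, ∃ x ∈ A, ¬ leStar x y } := by
    apply csInf_mem
    refine ⟨#(univ : Set Baire), univ, rfl, fun y => ⟨fun n => y n + 1, mem_univ _, ?_⟩⟩
    intro hy
    obtain ⟨n, hn⟩ := hy.exists
    simp at hn
  obtain ⟨A, h1, h2⟩ := this
  exact ⟨A, h1, h2⟩

lemma aleph0_le_bnum : ℵ₀ ≤ bnum leStar := by
  apply le_csInf
  · obtain ⟨A, h1, h2⟩ := exists_unbounded_bnum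
    exact ⟨#A, A, rfl, h2⟩
  · rintro c ⟨A, rfl, hA⟩
    by_contra hc
    have hfin : A.Finite := by
      rw [← Cardinal.lt_aleph0_iff_set_finite]; exact not_le.mp hc
    obtain ⟨x, hx1, hx2⟩ := hA (fun n => hfin.toFinset.sup (fun z => z n))
    exact hx2 (Filter.Eventually.of_forall fun n =>
      Finset.le_sup (f := fun z => z n) (hfin.mem_toFinset.mpr hx1))

lemma mk_baire : #Baire = continuum := by
  rw [show (Baire : Type) = (ℕ → ℕ) from rfl, mk_arrow, mk_nat, lift_aleph0, aleph0_power_aleph0]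

lemma dominating_univ : ∀ x : Baire, ∃ y ∈ (univ : Set Baire), leStar x y :=
  fun x => ⟨x, mem_univ x, leStar_refl x⟩

lemma dnum_le_continuum : dnum leStar ≤ continuum := by
  have := dnum_le_of_dominating dominating_univ
  rwa [mk_univ, mk_baire] at this

lemma bnum_le_dnum : bnum leStar ≤ dnum leStar := by
  obtain ⟨D, hD1, hD2⟩ := exists_dominating_dnum ⟨univ, dominating_univ⟩
  rw [← hD1]
  apply csInf_le'
  refine ⟨D, rfl, fun y => ?_⟩
  obtain ⟨d, hd1, hd2⟩ := hD2 (fun n => y n + 1)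
  refine ⟨d, hd1, fun hdy => ?_⟩
  obtain ⟨n, h1, h2⟩ := (hd2.and hdy).exists
  simp only at h1
  omega


lemma card_Iio_lt (c : (bnum leStar).ord.ToType) :
    #({ξ : (bnum leStar).ord.ToType | ξ < c}) < bnum leStar := by
  haveI i : IsWellOrder (bnum leStar).ord.ToType (· < ·) := isWellOrder_lt
  have h1a := Cardinal.card_typein_toType_lt (bnum leStar) c
  have h1b := @Ordinal.card_typein (bnum leStar).ord.ToType (· < ·) i c
  exact mk_Iio_toType_ord_lt c

lemma card_Iic_lt (c : (bnum leStar).ord.ToType) :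
    #({ξ : (bnum leStar).ord.ToType | ξ ≤ c}) < bnum leStar := by
  have hsub : {ξ : (bnum leStar).ord.ToType | ξ ≤ c} ⊆ {ξ | ξ < c} ∪ {c} := by
    intro ξ hξ
    have hξ' : ξ ≤ c := hξ
    rcases lt_or_eq_of_le hξ' with h | h
    · exact Or.inl h
    · exact Or.inr (by simp [h])
  have h2 : #({ξ : (bnum leStar).ord.ToType | ξ ≤ c}) ≤ #({ξ : (bnum leStar).ord.ToType | ξ < c}) + 1 := by
    apply le_trans (mk_le_mk_of_subset hsub)
    apply le_trans (mk_union_le _ _)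
    simp
  exact lt_of_le_of_lt h2
    (Cardinal.add_lt_of_lt aleph0_le_bnum (card_Iio_lt c) (one_lt_aleph0.trans_le aleph0_le_bnum))

/-- every subset of card < bnum of the initial ordinal of bnum has a strict upper bound -/
lemma exists_strict_ub {s : Set (bnum leStar).ord.ToType} (hs : #s < bnum leStar) :
    ∃ b, ∀ x ∈ s, x < b := by
  have hreg : (bnum leStar) ≤ (Cardinal.ord (bnum leStar)).cof := by
    by_contra hc
    push_neg at hc
    haveI i : IsWellOrder (bnum leStar).ord.ToType (· < ·) := isWellOrder_lt
    obtain ⟨S, hS1, hS2⟩ := Order.cof_eq (bnum leStar).ord.ToType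
    rw [Ordinal.cof_toType] at hS2
    obtain ⟨A, hA1, hA2⟩ := exists_unbounded_bnum
    have hAk : #A = (bnum leStar) := hA1
    have hAeq : #A = #((bnum leStar).ord.ToType) := by rw [mk_toType, card_ord]; exact hAk
    obtain ⟨a⟩ := Cardinal.eq.mp hAeq
    -- a : A ≃ (bnum leStar).ord.ToType
    -- for each c ∈ S, bound the family {a⁻¹ ξ : ξ ≤ c}
    have hbdd : ∀ c : (bnum leStar).ord.ToType, ∃ y, ∀ ξ : (bnum leStar).ord.ToType, ξ ≤ c → leStar (a.symm ξ : Baire) y := by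
      intro c
      have hcard : #(((fun ξ : (bnum leStar).ord.ToType => (a.symm ξ : Baire)) '' {ξ | ξ ≤ c})) < (bnum leStar) :=
        lt_of_le_of_lt mk_image_le (card_Iic_lt c)
      obtain ⟨y, hy⟩ := bounded_of_lt_bnum hcard
      exact ⟨y, fun ξ hξ => hy _ (mem_image_of_mem _ hξ)⟩
    choose g hg using hbdd
    -- the family {g c : c ∈ S} has size < (bnum leStar) hence bounded
    have hgcard : #((fun c : (bnum leStar).ord.ToType => g c) '' S) < (bnum leStar) := by
      apply lt_of_le_of_lt mk_image_le
      rw [hS2]; exact hc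
    obtain ⟨Y, hY⟩ := bounded_of_lt_bnum hgcard
    obtain ⟨x, hx1, hx2⟩ := hA2 Y
    -- x = a.symm (a x) for x ∈ A
    obtain ⟨c, hc1, hc2⟩ := hS1 (a ⟨x, hx1⟩)
    have : leStar x Y := by
      have h1 : leStar x (g c) := by
        have := hg c (a ⟨x, hx1⟩) hc2
        rwa [Equiv.symm_apply_apply] at this
      exact leStar_trans h1 (hY _ (mem_image_of_mem _ hc1))
    exact hx2 this
  -- now use lt_cof_type
  haveI i : IsWellOrder (bnum leStar).ord.ToType (· < ·) := isWellOrder_lt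
  have h2 : #s < Ordinal.cof (Ordinal.type ((· < ·) : (bnum leStar).ord.ToType → (bnum leStar).ord.ToType → Prop)) := by
    rw [type_toType]; exact lt_of_lt_of_le hs hreg
  by_contra hnb
  push_neg at hnb
  have h3 := Order.cof_le (s := s) (fun b => by obtain ⟨x, hx, hxb⟩ := hnb b; exact ⟨x, hx, hxb⟩)
  rw [Ordinal.cof_toType] at h3
  exact absurd (lt_of_lt_of_le hs hreg) (not_lt.mpr h3)

lemma scale_spec (dβ : Baire) (β : (bnum leStar).ord.ToType)
    (rec : ∀ a : (bnum leStar).ord.ToType, a < β → Baire) :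
    ∃ z : Baire, (∀ a (ha : a < β), evLT (rec a ha) z) ∧ leStar dβ z := by
  set A : Set Baire :=
    ((fun p : {a : (bnum leStar).ord.ToType // a < β} => fun n => rec p.1 p.2 n + 1) ''
      univ) ∪ {dβ} with hA
  have hcard : #A < bnum leStar := by
    have h1 : #A ≤ #({a : (bnum leStar).ord.ToType | a < β}) + 1 := by
      apply le_trans (mk_union_le _ _)
      simp only [mk_fintype, Fintype.card_unique, Nat.cast_one]
      gcongr
      exact le_trans mk_image_le (by rw [mk_univ]; exact le_of_eq rfl)
    exact lt_of_le_of_lt h1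
      (Cardinal.add_lt_of_lt aleph0_le_bnum (card_Iio_lt β) (one_lt_aleph0.trans_le aleph0_le_bnum))
  obtain ⟨z, hz⟩ := bounded_of_lt_bnum hcard
  refine ⟨z, fun a ha => ?_, hz dβ (Or.inr rfl)⟩
  have := hz (fun n => rec a ha n + 1) (Or.inl (mem_image_of_mem _ (mem_univ (⟨a, ha⟩ : {a : (bnum leStar).ord.ToType // a < β}))))
  exact this.mono fun n hn => by simpa using Nat.lt_of_succ_le hn

noncomputable def scaleF (d : (bnum leStar).ord.ToType → Baire) :
    (bnum leStar).ord.ToType → Baire :=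
  WellFounded.fix (wellFounded_lt)
    (fun β rec => Classical.choose (scale_spec (d β) β rec))

lemma scaleF_prop (d : (bnum leStar).ord.ToType → Baire) (β : (bnum leStar).ord.ToType) :
    (∀ a, a < β → evLT (scaleF d a) (scaleF d β)) ∧ leStar (d β) (scaleF d β) := by
  have hfix : scaleF d β =
      Classical.choose (scale_spec (d β) β (fun a _ => scaleF d a)) := by
    exact WellFounded.fix_eq _ _ β
  obtain ⟨h1, h2⟩ := Classical.choose_spec (scale_spec (d β) β (fun a _ => scaleF d a))
  rw [← hfix] at h1 h2
  exact ⟨fun a ha => h1 a ha, h2⟩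

lemma scaleF_mono (d : (bnum leStar).ord.ToType → Baire) {a b : (bnum leStar).ord.ToType}
    (hab : a ≤ b) : leStar (scaleF d a) (scaleF d b) := by
  rcases lt_or_eq_of_le hab with h | h
  · exact ((scaleF_prop d b).1 a h).leStar
  · rw [h]; exact leStar_refl _

lemma exists_scale (h : bnum leStar = dnum leStar) :
    ∃ y : (bnum leStar).ord.ToType → Baire,
      (∀ a b, a < b → evLT (y a) (y b)) ∧ (∀ x, ∃ a, leStar x (y a)) := by
  obtain ⟨D, hD1, hD2⟩ := exists_dominating_dnum ⟨univ, dominating_univ⟩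
  have hDcard : #D = #((bnum leStar).ord.ToType) := by
    rw [mk_toType, card_ord, hD1, h]
  obtain ⟨e⟩ := Cardinal.eq.mp hDcard
  set d : (bnum leStar).ord.ToType → Baire := fun a => (e.symm a : Baire) with hd
  refine ⟨scaleF d, fun a b hab => (scaleF_prop d b).1 a hab, fun x => ?_⟩
  obtain ⟨yd, hyd1, hyd2⟩ := hD2 x
  refine ⟨e ⟨yd, hyd1⟩, leStar_trans hyd2 ?_⟩
  have := (scaleF_prop d (e ⟨yd, hyd1⟩)).2
  simp only [hd, Equiv.symm_apply_apply] at this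
  exact this

lemma relMod_self (f : Baire → Baire) : RelMod leStar ({∅} : Set (Set Baire)) f f := by
  unfold RelMod
  simp only [mem_singleton_iff]
  ext x
  simp [leStar_refl]

lemma relMod_iff {f g : Baire → Baire} :
    RelMod leStar ({∅} : Set (Set Baire)) f g ↔ ∀ x, leStar (f x) (g x) := by
  unfold RelMod
  simp only [mem_singleton_iff, Set.eq_empty_iff_forall_notMem, mem_setOf_eq, not_not]

lemma dLK_nonempty : ∃ D : Set (continuum.ord.ToType → (bnum leStar).ord.ToType),
    ∀ f : continuum.ord.ToType → (bnum leStar).ord.ToType,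
      ∃ g ∈ D, #{a | ¬ f a ≤ g a} < bnum leStar := by
  refine ⟨(univ : Set (continuum.ord.ToType → (bnum leStar).ord.ToType)), fun f => ⟨f, mem_univ _, ?_⟩⟩
  have : {a | ¬ f a ≤ f a} = (∅ : Set continuum.ord.ToType) := by
    ext a; simp
  rw [this, mk_emptyCollection]
  exact lt_of_lt_of_le aleph0_pos aleph0_le_bnum

lemma bnum_le_dLK : bnum leStar ≤ dLamKappa continuum (bnum leStar) := by
  apply le_dnum _ dLK_nonempty
  intro G hG
  by_contra hc
  push_neg at hc
  -- build an undominated function by diagonalization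
  have hub : ∀ α : continuum.ord.ToType, ∃ b : (bnum leStar).ord.ToType,
      ∀ g : ↥G, g.1 α < b := by
    intro α
    have hcard : #((fun g : ↥G => g.1 α) '' Set.univ) < bnum leStar :=
      lt_of_le_of_lt (le_trans mk_image_le (le_of_eq Cardinal.mk_univ)) hc
    obtain ⟨b, hb⟩ := exists_strict_ub hcard
    exact ⟨b, fun g => hb _ (mem_image_of_mem _ (Set.mem_univ g))⟩
  choose F hF using hub
  obtain ⟨g, hg1, hg2⟩ := hG F
  have huniv : {a | ¬ F a ≤ g a} = Set.univ := by
    ext a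
    simp only [mem_setOf_eq, Set.mem_univ, iff_true, not_le]
    exact hF a ⟨g, hg1⟩
  rw [huniv, Cardinal.mk_univ, mk_toType, card_ord] at hg2
  exact absurd hg2 (not_lt.mpr (le_trans bnum_le_dnum dnum_le_continuum))

lemma mk_lam : #(continuum.ord.ToType) = #Baire := by
  rw [mk_toType, card_ord, mk_baire]

/-- Direction 1: `𝔡^𝔠_𝔟 ≤ 𝔡(≤*_∅)`. -/
lemma dLK_le_dnumRel (h : bnum leStar = dnum leStar) :
    dLamKappa continuum (bnum leStar) ≤ dnum (RelMod leStar ({∅} : Set (Set Baire))) := by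
  obtain ⟨y, hy1, hy2⟩ := exists_scale h
  obtain ⟨e⟩ := Cardinal.eq.mp mk_lam
  obtain ⟨D, hD1, hD2⟩ := exists_dominating_dnum
    (R := RelMod leStar ({∅} : Set (Set Baire)))
    ⟨univ, fun f => ⟨f, mem_univ _, relMod_self f⟩⟩
  -- for each dominating function hD, take its "trace"
  have hmin : ∀ (u : Baire → Baire) (α : continuum.ord.ToType),
      {b | leStar (u (e α)) (y b)}.Nonempty := fun u α => hy2 (u (e α))
  set hat : (Baire → Baire) → (continuum.ord.ToType → (bnum leStar).ord.ToType) :=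
    fun u α => WellFounded.min wellFounded_lt _ (hmin u α) with hhat
  have hat_mem : ∀ u α, leStar (u (e α)) (y (hat u α)) := fun u α =>
    WellFounded.min_mem wellFounded_lt _ (hmin u α)
  have hat_min : ∀ u α b, leStar (u (e α)) (y b) → ¬ b < hat u α := fun u α b hb =>
    WellFounded.not_lt_min wellFounded_lt {b | leStar (u (e α)) (y b)} hb
  have hdom : ∀ f : continuum.ord.ToType → (bnum leStar).ord.ToType,
      ∃ g ∈ (fun u : ↥D => hat u) '' univ, #{a | ¬ f a ≤ g a} < bnum leStar := by
    intro f
    obtain ⟨u, hu1, hu2⟩ := hD2 (fun x => y (f (e.symm x)))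
    rw [relMod_iff] at hu2
    refine ⟨hat u, mem_image_of_mem _ (mem_univ (⟨u, hu1⟩ : ↥D)), ?_⟩
    have hall : ∀ α, f α ≤ hat u α := by
      intro α
      by_contra hlt
      push_neg at hlt
      have h1 : leStar (y (f α)) (u (e α)) := by
        have := hu2 (e α)
        rwa [Equiv.symm_apply_apply] at this
      have h2 : leStar (u (e α)) (y (hat u α)) := hat_mem u α
      have h3 : evLT (y (hat u α)) (y (f α)) := hy1 _ _ hlt
      exact not_leStar_evLT (leStar_trans h1 h2) h3
    have : {a | ¬ f a ≤ hat u a} = (∅ : Set continuum.ord.ToType) := by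
      ext a; simp [hall a]
    rw [this, mk_emptyCollection]
    exact lt_of_lt_of_le aleph0_pos aleph0_le_bnum
  have hle := dnum_le_of_dominating hdom
  apply le_trans hle
  rw [← hD1]
  exact le_trans mk_image_le (by rw [mk_univ])

/-- Direction 2: `𝔡(≤*_∅) ≤ 𝔡^𝔠_𝔟`. -/
lemma dnumRel_le_dLK (h : bnum leStar = dnum leStar) :
    dnum (RelMod leStar ({∅} : Set (Set Baire))) ≤ dLamKappa continuum (bnum leStar) := by
  obtain ⟨y, hy1, hy2⟩ := exists_scale h
  have hymono : ∀ {a b : (bnum leStar).ord.ToType}, a ≤ b → leStar (y a) (y b) := by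
    intro a b hab
    rcases lt_or_eq_of_le hab with h' | h'
    · exact (hy1 a b h').leStar
    · rw [h']; exact leStar_refl _
  obtain ⟨e⟩ := Cardinal.eq.mp mk_lam
  obtain ⟨G, hG1, hG2⟩ := exists_dominating_dnum
    (R := fun f g : continuum.ord.ToType → (bnum leStar).ord.ToType =>
      #{a | ¬ f a ≤ g a} < bnum leStar) dLK_nonempty
  set H : ↥G × (bnum leStar).ord.ToType → (Baire → Baire) :=
    fun p => fun x => fun n => max (y (p.1.1 (e.symm x)) n) (y p.2 n) with hH
  have hdom : ∀ f : Baire → Baire, ∃ u ∈ range H, RelMod leStar ({∅} : Set (Set Baire)) f u := by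
    intro f
    have hmin : ∀ α : continuum.ord.ToType, {b | leStar (f (e α)) (y b)}.Nonempty :=
      fun α => hy2 (f (e α))
    set fhat : continuum.ord.ToType → (bnum leStar).ord.ToType :=
      fun α => WellFounded.min wellFounded_lt _ (hmin α) with hfhat
    have fhat_mem : ∀ α, leStar (f (e α)) (y (fhat α)) := fun α =>
      WellFounded.min_mem wellFounded_lt _ (hmin α)
    obtain ⟨g, hg1, hg2⟩ := hG2 fhat
    have hcard : #(fhat '' {a | ¬ fhat a ≤ g a}) < bnum leStar :=
      lt_of_le_of_lt mk_image_le hg2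
    obtain ⟨b, hb⟩ := exists_strict_ub hcard
    refine ⟨H (⟨g, hg1⟩, b), mem_range_self _, ?_⟩
    rw [relMod_iff]
    intro x
    have hx : f x = f (e (e.symm x)) := by rw [Equiv.apply_symm_apply]
    have h1 : leStar (f x) (y (fhat (e.symm x))) := by rw [hx]; exact fhat_mem _
    by_cases hE : fhat (e.symm x) ≤ g (e.symm x)
    · have h2 : leStar (y (fhat (e.symm x))) (y (g (e.symm x))) := hymono hE
      refine leStar_trans (leStar_trans h1 h2) (Filter.Eventually.of_forall fun n => ?_)
      exact le_max_left _ _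
    · have hbx : fhat (e.symm x) < b := hb _ (mem_image_of_mem _ hE)
      have h2 : leStar (y (fhat (e.symm x))) (y b) := (hy1 _ _ hbx).leStar
      refine leStar_trans (leStar_trans h1 h2) (Filter.Eventually.of_forall fun n => ?_)
      exact le_max_right _ _
  have hle := dnum_le_of_dominating hdom
  apply le_trans hle
  have hcard : #(range H) ≤ dLamKappa continuum (bnum leStar) * bnum leStar := by
    apply le_trans mk_range_le
    rw [mk_prod]
    simp only [Cardinal.lift_id]
    rw [hG1, mk_toType, card_ord]
    rfl
  apply le_trans hcard
  rw [Cardinal.mul_eq_max (le_trans aleph0_le_bnum bnum_le_dLK) aleph0_le_bnum]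
  exact max_le le_rfl bnum_le_dLK

/-- if `𝔟 = 𝔡` then `𝔡(≤*_{{∅}}) = 𝔡^𝔠_𝔟`. -/
theorem stmt10 (h : bnum leStar = dnum leStar) :
    dnum (RelMod leStar ({∅} : Set (Set Baire))) = dLamKappa continuum (bnum leStar) :=
  le_antisymm (dnumRel_le_dLK h) (dLK_le_dnumRel h)
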